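/- Let X₁ have distribution function F with E X₁ = 0, E X₁² = 1, β³ = E|X₁|³ < ∞, let f be its characteristic function, f_n(t) = (f(t/√n))ⁿ, ℓ_n = β³/√n + 1/√n. Then for every n ≥ 1 and every t ∈ ℝ: |f_n(t)| ≤ exp{−t²/2 + κ ℓ_n |t|³}, where κ = sup_{x>0} |cos x − 1 + x²/2|/x³ = 0.09916191…. -/

import Mathlib

/-!
If `Y` is an independent copy of `X ~ μ`, then `|φ(s)|² = E cos (s (X - Y))`. The definition of `κ`
gives `cos u ≤ 1 - u²/2 + κ|u|³`, and `|x - y|³ ≤ (x - y)² (|x| + |y|)` turns the cubic term into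
moments of `μ`: `E (X - Y)² = 2` and `E (X - Y)² (|X| + |Y|) = 2 (β³ + E|X|) ≤ 2 (β³ + 1)`. Hence
`|φ(s)|² ≤ 1 - s² + 2κ|s|³ (β³ + 1) ≤ exp (-s² + 2κ|s|³ (β³ + 1))`; take square roots, put
`s = t/√n` and raise to the `n`-th power.
-/

open MeasureTheory ProbabilityTheory

/-- `κ = sup_{x>0} |cos x − 1 + x²/2| / x³ = 0.09916191…`. -/
noncomputable def kappa : ℝ :=
  ⨆ x : Set.Ioi (0 : ℝ), |Real.cos x - 1 + (x : ℝ) ^ 2 / 2| / (x : ℝ) ^ 3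

lemma kappa_nonneg : 0 ≤ kappa :=
  Real.iSup_nonneg fun x => div_nonneg (abs_nonneg _) (pow_nonneg (le_of_lt x.2) 3)

lemma bddAbove_range_cos_remainder_div_cube :
    BddAbove (Set.range fun x : Set.Ioi (0 : ℝ) =>
      |Real.cos x - 1 + (x : ℝ) ^ 2 / 2| / (x : ℝ) ^ 3) := by
  refine ⟨1, ?_⟩
  rintro _ ⟨⟨y, hy : 0 < y⟩, rfl⟩
  rw [div_le_iff₀ (by positivity), one_mul,
    abs_of_nonneg (by linarith [Real.one_sub_sq_div_two_le_cos (x := y)])]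
  rcases le_or_gt y 1 with hy1 | hy1
  · have h := Real.cos_bound (x := y) (by rwa [abs_of_pos hy])
    rw [abs_of_pos hy, abs_le] at h
    nlinarith [pow_pos hy 3]
  · nlinarith [Real.cos_le_one y]

lemma abs_cos_sub_one_add_sq_div_two_le {x : ℝ} (hx : 0 < x) :
    |Real.cos x - 1 + x ^ 2 / 2| ≤ kappa * x ^ 3 :=
  (div_le_iff₀ (pow_pos hx 3)).1 (le_ciSup bddAbove_range_cos_remainder_div_cube ⟨x, hx⟩)

lemma cos_le_one_sub_sq_div_two_add_kappa_mul (u : ℝ) :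
    Real.cos u ≤ 1 - u ^ 2 / 2 + kappa * |u| ^ 3 := by
  rcases eq_or_ne u 0 with rfl | hu
  · simp
  · have h := abs_cos_sub_one_add_sq_div_two_le (abs_pos.2 hu)
    rw [Real.cos_abs, sq_abs] at h
    linarith [le_abs_self (Real.cos u - 1 + u ^ 2 / 2)]

lemma cos_mul_sub_le (s x y : ℝ) :
    Real.cos (s * (x - y)) ≤
      1 - s ^ 2 * (x - y) ^ 2 / 2 + kappa * |s| ^ 3 * ((x - y) ^ 2 * (|x| + |y|)) := by
  have hcube : |x - y| ^ 3 ≤ (x - y) ^ 2 * (|x| + |y|) := by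
    rw [pow_succ, sq_abs]
    exact mul_le_mul_of_nonneg_left (abs_sub _ _) (sq_nonneg _)
  calc Real.cos (s * (x - y)) ≤ 1 - (s * (x - y)) ^ 2 / 2 + kappa * |s * (x - y)| ^ 3 :=
        cos_le_one_sub_sq_div_two_add_kappa_mul _
    _ = 1 - s ^ 2 * (x - y) ^ 2 / 2 + kappa * |s| ^ 3 * |x - y| ^ 3 := by
        rw [abs_mul]; ring
    _ ≤ _ := by gcongr; exact mul_nonneg kappa_nonneg (by positivity)

section CharFun

variable (μ : Measure ℝ) [IsFiniteMeasure μ]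

lemma re_charFun_real (t : ℝ) :
    (charFun μ t).re = ∫ x, Real.cos (t * x) ∂μ := by
  rw [charFun_eq_integral_innerProbChar, ← RCLike.re_eq_complex_re,
    ← integral_re (BoundedContinuousFunction.integrable μ _)]
  congr 1 with x
  rw [BoundedContinuousFunction.innerProbChar_apply, RCLike.re_eq_complex_re,
    Complex.exp_ofReal_mul_I_re, RCLike.inner_apply, conj_trivial, mul_comm]

lemma im_charFun_real (t : ℝ) :
    (charFun μ t).im = ∫ x, Real.sin (t * x) ∂μ := by
  rw [charFun_eq_integral_innerProbChar, ← RCLike.im_eq_complex_im,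
    ← integral_im (BoundedContinuousFunction.integrable μ _)]
  congr 1 with x
  rw [BoundedContinuousFunction.innerProbChar_apply, RCLike.im_eq_complex_im,
    Complex.exp_ofReal_mul_I_im, RCLike.inner_apply, conj_trivial, mul_comm]

lemma integrable_cos_comp {g : ℝ → ℝ} (hg : Continuous g) :
    Integrable (fun x => Real.cos (g x)) μ :=
  .of_bound (by fun_prop) 1 (ae_of_all _ fun _ => by simpa using Real.abs_cos_le_one _)

lemma integrable_sin_comp {g : ℝ → ℝ} (hg : Continuous g) :
    Integrable (fun x => Real.sin (g x)) μ :=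
  .of_bound (by fun_prop) 1 (ae_of_all _ fun _ => by simpa using Real.abs_sin_le_one _)

lemma integral_cos_mul_sub (t x : ℝ) :
    ∫ y, Real.cos (t * (x - y)) ∂μ =
      Real.cos (t * x) * (charFun μ t).re + Real.sin (t * x) * (charFun μ t).im := by
  simp_rw [mul_sub, Real.cos_sub]
  rw [integral_add ((integrable_cos_comp μ (continuous_const_mul t)).const_mul _)
      ((integrable_sin_comp μ (continuous_const_mul t)).const_mul _),
    integral_const_mul, integral_const_mul, re_charFun_real, im_charFun_real]

lemma integrable_integral_cos_mul_sub (t : ℝ) :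
    Integrable (fun x => ∫ y, Real.cos (t * (x - y)) ∂μ) μ := by
  simp_rw [integral_cos_mul_sub]
  exact ((integrable_cos_comp μ (continuous_const_mul t)).mul_const _).add
    ((integrable_sin_comp μ (continuous_const_mul t)).mul_const _)

lemma sq_norm_charFun_eq_integral_integral_cos (t : ℝ) :
    ‖charFun μ t‖ ^ 2 = ∫ x, ∫ y, Real.cos (t * (x - y)) ∂μ ∂μ := by
  simp_rw [integral_cos_mul_sub]
  rw [integral_add ((integrable_cos_comp μ (continuous_const_mul t)).mul_const _)
      ((integrable_sin_comp μ (continuous_const_mul t)).mul_const _),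
    integral_mul_const, integral_mul_const, ← re_charFun_real, ← im_charFun_real,
    Complex.sq_norm, Complex.normSq_apply]

end CharFun

lemma integrable_abs_pow_of_le {μ : Measure ℝ} [IsFiniteMeasure μ] {k m : ℕ} (hkm : k ≤ m)
    (hm : Integrable (fun x => |x| ^ m) μ) : Integrable (fun x => |x| ^ k) μ := by
  refine ((integrable_const 1).add hm).mono' (by fun_prop) (ae_of_all _ fun x => ?_)
  rw [Real.norm_of_nonneg (by positivity), Pi.add_apply]
  rcases le_total |x| 1 with hx | hx
  · linarith [pow_le_one₀ (abs_nonneg x) hx (n := k), pow_nonneg (abs_nonneg x) m]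
  · linarith [pow_le_pow_right₀ hx hkm]

section Moments

variable {μ : Measure ℝ} [IsProbabilityMeasure μ]

lemma integrable_of_integrable_abs_cube (hint3 : Integrable (fun x => |x| ^ 3) μ) :
    Integrable (fun y => y) μ ∧ Integrable (fun y => y ^ 2) μ ∧ Integrable (fun y => |y|) μ ∧
      Integrable (fun y => y * |y|) μ := by
  have habs : Integrable (fun y : ℝ => |y|) μ := by
    simpa using integrable_abs_pow_of_le (by norm_num : 1 ≤ 3) hint3
  have hsq : Integrable (fun y : ℝ => |y| ^ 2) μ := integrable_abs_pow_of_le (by norm_num) hint3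
  exact ⟨habs.mono' (by fun_prop) (by simp), hsq.mono' (by fun_prop) (by simp), habs,
    hsq.mono' (by fun_prop) (by simp [sq])⟩

lemma integrable_moment_combination (hint3 : Integrable (fun x => |x| ^ 3) μ)
    (a b c d e g : ℝ) :
    Integrable (fun y => a + b * y + c * y ^ 2 + d * |y| + e * (y * |y|) + g * |y| ^ 3) μ := by
  obtain ⟨hid, hsq, habs, hmul⟩ := integrable_of_integrable_abs_cube hint3
  exact (((((integrable_const a).add (hid.const_mul b)).add (hsq.const_mul c)).add
    (habs.const_mul d)).add (hmul.const_mul e)).add (hint3.const_mul g)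

lemma integral_moment_combination (hmean : ∫ x, x ∂μ = 0) (hvar : ∫ x, x ^ 2 ∂μ = 1)
    (hint3 : Integrable (fun x => |x| ^ 3) μ) (a b c d e g : ℝ) :
    ∫ y, (a + b * y + c * y ^ 2 + d * |y| + e * (y * |y|) + g * |y| ^ 3) ∂μ =
      a + c + d * ∫ y, |y| ∂μ + e * ∫ y, y * |y| ∂μ + g * ∫ y, |y| ^ 3 ∂μ := by
  obtain ⟨hid, hsq, habs, hmul⟩ := integrable_of_integrable_abs_cube hint3
  have h1 : Integrable (fun y => a + b * y) μ := (integrable_const a).add (hid.const_mul b)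
  have h2 : Integrable (fun y => a + b * y + c * y ^ 2) μ := h1.add (hsq.const_mul c)
  have h3 : Integrable (fun y => a + b * y + c * y ^ 2 + d * |y|) μ := h2.add (habs.const_mul d)
  have h4 : Integrable (fun y => a + b * y + c * y ^ 2 + d * |y| + e * (y * |y|)) μ :=
    h3.add (hmul.const_mul e)
  rw [integral_add h4 (hint3.const_mul g), integral_add h3 (hmul.const_mul e),
    integral_add h2 (habs.const_mul d), integral_add h1 (hsq.const_mul c),
    integral_add (integrable_const a) (hid.const_mul b)]
  simp only [integral_const_mul, integral_const_mul b fun y : ℝ => y, integral_const, hmean, hvar,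
    probReal_univ, smul_eq_mul]
  ring

lemma integral_abs_le_one_of_integral_sq_eq_one (hsq : Integrable (fun x => x ^ 2) μ)
    (hvar : ∫ x, x ^ 2 ∂μ = 1) : ∫ x, |x| ∂μ ≤ 1 :=
  calc ∫ x, |x| ∂μ ≤ ∫ x, (1 + x ^ 2) / 2 ∂μ :=
        integral_mono_of_nonneg (ae_of_all _ fun x => abs_nonneg x)
          (((integrable_const 1).add hsq).div_const 2)
          (ae_of_all _ fun x => by nlinarith [sq_nonneg (|x| - 1), sq_abs x])
    _ = 1 := by
        rw [integral_div, integral_add (integrable_const 1) hsq, hvar]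
        simp

lemma integral_integral_cos_mul_sub_le (hmean : ∫ x, x ∂μ = 0) (hvar : ∫ x, x ^ 2 ∂μ = 1)
    (hint3 : Integrable (fun x => |x| ^ 3) μ) (s : ℝ) :
    ∫ x, ∫ y, Real.cos (s * (x - y)) ∂μ ∂μ ≤
      1 - s ^ 2 + 2 * (kappa * |s| ^ 3) * (∫ x, |x| ^ 3 ∂μ + 1) := by
  set K := kappa * |s| ^ 3
  set m₁ := ∫ x, |x| ∂μ
  set m₂ := ∫ x, x * |x| ∂μ
  set β := ∫ x, |x| ^ 3 ∂μ
  have hK : 0 ≤ K := mul_nonneg kappa_nonneg (by positivity)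
  have hcube : ∀ x : ℝ, |x| ^ 3 = x ^ 2 * |x| := fun x => by rw [pow_succ, sq_abs]
  -- the inner bound is itself a moment combination in `x` (with no `x * |x|` term)
  have hinner : ∀ x, ∫ y, Real.cos (s * (x - y)) ∂μ ≤ (1 - s ^ 2 / 2 + K * β) + (-2 * K * m₂) * x
      + (-s ^ 2 / 2 + K * m₁) * x ^ 2 + K * |x| + 0 * (x * |x|) + K * |x| ^ 3 := by
    intro x
    calc ∫ y, Real.cos (s * (x - y)) ∂μ
        ≤ ∫ y, ((1 - s ^ 2 / 2 * x ^ 2 + K * |x| ^ 3) + (s ^ 2 * x - 2 * K * (x * |x|)) * y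
            + (-s ^ 2 / 2 + K * |x|) * y ^ 2 + (K * x ^ 2) * |y| + (-2 * K * x) * (y * |y|)
            + K * |y| ^ 3) ∂μ := by
          refine integral_mono (integrable_cos_comp μ (by fun_prop))
            (integrable_moment_combination hint3 ..) fun y => (cos_mul_sub_le s x y).trans_eq ?_
          rw [hcube x, hcube y]; ring
      _ = _ := integral_moment_combination hmean hvar hint3 ..
      _ = _ := by rw [hcube x]; ring
  calc ∫ x, ∫ y, Real.cos (s * (x - y)) ∂μ ∂μ
      ≤ ∫ x, ((1 - s ^ 2 / 2 + K * β) + (-2 * K * m₂) * x + (-s ^ 2 / 2 + K * m₁) * x ^ 2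
          + K * |x| + 0 * (x * |x|) + K * |x| ^ 3) ∂μ :=
        integral_mono (integrable_integral_cos_mul_sub μ s) (integrable_moment_combination hint3 ..)
          hinner
    _ = 1 - s ^ 2 + 2 * K * (β + m₁) := by
        rw [integral_moment_combination hmean hvar hint3]; ring
    _ ≤ 1 - s ^ 2 + 2 * K * (β + 1) := by
        gcongr
        exact integral_abs_le_one_of_integral_sq_eq_one
          (integrable_of_integrable_abs_cube hint3).2.1 hvar

lemma norm_charFun_le_exp (hmean : ∫ x, x ∂μ = 0) (hvar : ∫ x, x ^ 2 ∂μ = 1)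
    (hint3 : Integrable (fun x => |x| ^ 3) μ) (s : ℝ) :
    ‖charFun μ s‖ ≤ Real.exp (-s ^ 2 / 2 + kappa * |s| ^ 3 * (∫ x, |x| ^ 3 ∂μ + 1)) := by
  set z := -s ^ 2 / 2 + kappa * |s| ^ 3 * (∫ x, |x| ^ 3 ∂μ + 1) with hz
  refine (pow_le_pow_iff_left₀ (norm_nonneg _) (Real.exp_pos z).le two_ne_zero).1 ?_
  calc ‖charFun μ s‖ ^ 2 = ∫ x, ∫ y, Real.cos (s * (x - y)) ∂μ ∂μ :=
        sq_norm_charFun_eq_integral_integral_cos μ s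
    _ ≤ 1 - s ^ 2 + 2 * (kappa * |s| ^ 3) * (∫ x, |x| ^ 3 ∂μ + 1) :=
        integral_integral_cos_mul_sub_le hmean hvar hint3 s
    _ ≤ Real.exp (2 * z) := by linarith [Real.add_one_le_exp (2 * z)]
    _ = Real.exp z ^ 2 := by rw [← Real.exp_nat_mul]; norm_num

end Moments

/-- Third estimate of Lemma 2: for a distribution with zero mean, unit variance and third
absolute moment `β³`, with `ℓ_n = β³/√n + 1/√n`, the characteristic function `f_n` of the
normalized `n`-fold sum satisfies `|f_n(t)| ≤ exp{−t²/2 + κ ℓ_n |t|³}`. -/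
theorem charFun_bound_f3 (μ : Measure ℝ) [IsProbabilityMeasure μ]
    (hmean : ∫ x, x ∂μ = 0) (hvar : ∫ x, x ^ 2 ∂μ = 1)
    (hint3 : Integrable (fun x => |x| ^ 3) μ)
    (β3 : ℝ) (hβ3 : β3 = ∫ x, |x| ^ 3 ∂μ)
    (f : ℝ → ℂ) (hf : ∀ t : ℝ, f t = ∫ x, Complex.exp (Complex.I * t * x) ∂μ)
    (n : ℕ) (hn : 1 ≤ n) (t : ℝ) :
    ‖(f (t / Real.sqrt n)) ^ n‖ ≤
      Real.exp (-t ^ 2 / 2 + kappa * (β3 / Real.sqrt n + 1 / Real.sqrt n) * |t| ^ 3) := by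
  have hf_eq : f = charFun μ := funext fun s => by
    rw [hf, charFun_apply_real]; congr 1 with x; ring_nf
  have hr : 0 < Real.sqrt n := Real.sqrt_pos.2 (by exact_mod_cast hn)
  have hrn : Real.sqrt n ^ 2 = n := Real.sq_sqrt n.cast_nonneg
  rw [hf_eq]
  calc ‖charFun μ (t / Real.sqrt n) ^ n‖
      ≤ Real.exp (-(t / Real.sqrt n) ^ 2 / 2 + kappa * |t / Real.sqrt n| ^ 3 * (β3 + 1)) ^ n := by
        rw [norm_pow, hβ3]
        exact pow_le_pow_left₀ (norm_nonneg _) (norm_charFun_le_exp hmean hvar hint3 _) n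
    _ = Real.exp (-t ^ 2 / 2 + kappa * (β3 / Real.sqrt n + 1 / Real.sqrt n) * |t| ^ 3) := by
        rw [← Real.exp_nat_mul, abs_div, abs_of_pos hr, div_pow, div_pow]
        generalize Real.sqrt n = r at hr hrn ⊢
        rw [← hrn]
        field_simp
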